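/- arXiv:2605.23284 — 6 statements merged into one kernel-verified Lean document; each statement's English description precedes it below -/
import Mathlib

section
/- Let E = F_q^n and let K be a subspace of E of dimension k. Then the sum over all subspaces J with K ≤ J ≤ E of μ(K,J) x^(n - dim J) y^(dim J) equals y^k · ∏_{i=0}^{n-k-1} (x - q^i y), where μ(K,J) = (-1)^(dim J - dim K) q^((dim J - dim K) choose 2) is the Möbius function of the subspace lattice of E. -/
/-!
By the correspondence theorem, the subspaces `J ≥ K` of `E` are the preimages of the subspaces
`W` of `E ⧸ K`, a space of dimension `m = n - k`, with `dim J = dim W + k`. Counting linearly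
independent `ℓ`-families of `E ⧸ K` in two ways (directly, and through the subspace they span)
shows that `E ⧸ K` has `gb q m ℓ` subspaces of dimension `ℓ`. The sum therefore becomes
`y ^ k * ∑ ℓ, gb q m ℓ * (-1) ^ ℓ * q ^ (ℓ choose 2) * x ^ (m - ℓ) * y ^ ℓ`, and the
`q`-binomial theorem, proved by induction on `m` from the `q`-Pascal rule, identifies this
with `y ^ k * ∏ i < m, (x - q ^ i * y)`.
-/

set_option linter.unusedSectionVars false

open Finset Matrix

variable {F : Type} [Field F] [Fintype F]

/-- The column space of a matrix: the span of its columns. -/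
noncomputable def colspace {n m : ℕ} (M : Matrix (Fin n) (Fin m) F) :
    Submodule F (Fin n → F) :=
  Submodule.span F (Set.range Mᵀ)

lemma col_mem_colspace {n m : ℕ} (M : Matrix (Fin n) (Fin m) F) (j : Fin m) :
    Mᵀ j ∈ colspace M :=
  Submodule.subset_span ⟨j, rfl⟩

/-- `codeSub C J = C(J) = { M ∈ C : colspace M ≤ J }`, as a submodule. -/
noncomputable def codeSub {n m : ℕ} (C : Submodule F (Matrix (Fin n) (Fin m) F))
    (J : Submodule F (Fin n → F)) : Submodule F (Matrix (Fin n) (Fin m) F) where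
  carrier := {M | M ∈ C ∧ colspace M ≤ J}
  zero_mem' := ⟨C.zero_mem, by
    rw [colspace]
    refine Submodule.span_le.2 ?_
    rintro _ ⟨j, rfl⟩
    have h : (0 : Matrix (Fin n) (Fin m) F)ᵀ j = 0 := by
      funext i; simp
    rw [h]; exact J.zero_mem⟩
  add_mem' := by
    rintro A B ⟨hA, hA'⟩ ⟨hB, hB'⟩
    refine ⟨C.add_mem hA hB, ?_⟩
    rw [colspace]
    refine Submodule.span_le.2 ?_
    rintro _ ⟨j, rfl⟩
    have h : (A + B)ᵀ j = Aᵀ j + Bᵀ j := by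
      funext i; simp [Matrix.transpose_apply]
    rw [h]
    exact J.add_mem (hA' (col_mem_colspace A j)) (hB' (col_mem_colspace B j))
  smul_mem' := by
    rintro c A ⟨hA, hA'⟩
    refine ⟨C.smul_mem c hA, ?_⟩
    rw [colspace]
    refine Submodule.span_le.2 ?_
    rintro _ ⟨j, rfl⟩
    have h : (c • A)ᵀ j = c • (Aᵀ j) := by
      funext i; simp [Matrix.transpose_apply]
    rw [h]
    exact J.smul_mem c (hA' (col_mem_colspace A j))

/-- Higher rank-support of a subcode: the sum of the column spaces of its members. -/
noncomputable def Supp {n m : ℕ} (D : Submodule F (Matrix (Fin n) (Fin m) F)) :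
    Submodule F (Fin n → F) :=
  ⨆ M ∈ (D : Set (Matrix (Fin n) (Fin m) F)), colspace M

/-- The linear functional `x ↦ ∑ i, x i * y i` (standard inner product with `y`). -/
noncomputable def dotForm {n : ℕ} (y : Fin n → F) : (Fin n → F) →ₗ[F] F where
  toFun x := ∑ i, x i * y i
  map_add' a b := by simp [add_mul, Finset.sum_add_distrib]
  map_smul' c a := by simp [Finset.mul_sum, mul_assoc]

/-- Orthogonal complement w.r.t. the standard inner product on `F^n`. -/
noncomputable def perp {n : ℕ} (J : Submodule F (Fin n → F)) : Submodule F (Fin n → F) :=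
  ⨅ y ∈ (J : Set (Fin n → F)), LinearMap.ker (dotForm y)

/-- The linear functional `N ↦ Tr (M Nᵀ)`. -/
noncomputable def traceForm {n m : ℕ} (M : Matrix (Fin n) (Fin m) F) :
    Matrix (Fin n) (Fin m) F →ₗ[F] F where
  toFun N := Matrix.trace (M * Nᵀ)
  map_add' A B := by simp [Matrix.transpose_add, Matrix.mul_add]
  map_smul' c A := by simp [Matrix.transpose_smul, Matrix.mul_smul]

/-- The trace dual code. -/
noncomputable def dualCode {n m : ℕ} (C : Submodule F (Matrix (Fin n) (Fin m) F)) :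
    Submodule F (Matrix (Fin n) (Fin m) F) :=
  ⨅ M ∈ (C : Set (Matrix (Fin n) (Fin m) F)), LinearMap.ker (traceForm M)

/-- Gaussian binomial coefficient `[a choose r]_q` as a rational number. -/
noncomputable def gb (q : ℚ) (a r : ℕ) : ℚ :=
  ∏ i ∈ Finset.range r, (q ^ a - q ^ i) / (q ^ r - q ^ i)

/-- Gaussian binomial with integer upper argument:
`[a choose b]_q = ∏_{i=0}^{b-1} (q^{a-i}-1)/(q^{b-i}-1)`. -/
noncomputable def gbZ (q : ℚ) (a : ℤ) (b : ℕ) : ℚ :=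
  ∏ i ∈ Finset.range b, (q ^ (a - (i : ℤ)) - 1) / (q ^ ((b : ℤ) - (i : ℤ)) - 1)

open Module

section GaussianBinomial

variable {Q : ℚ}

lemma gb_zero_right (Q : ℚ) (a : ℕ) : gb Q a 0 = 1 := by simp [gb]

lemma gb_eq_zero_of_lt (Q : ℚ) {a r : ℕ} (h : a < r) : gb Q a r = 0 :=
  Finset.prod_eq_zero (Finset.mem_range.2 h) (by simp)

lemma prod_range_pow_sub_ne_zero (hQ : 1 < Q) (r : ℕ) :
    ∏ i ∈ range r, (Q ^ r - Q ^ i) ≠ 0 :=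
  Finset.prod_ne_zero_iff.2 fun _ hi =>
    sub_ne_zero.2 (pow_lt_pow_right₀ hQ (Finset.mem_range.1 hi)).ne'

lemma prod_range_succ_pow_succ_sub (Q : ℚ) (a s : ℕ) :
    ∏ i ∈ range (s + 1), (Q ^ (a + 1) - Q ^ i)
      = (Q ^ (a + 1) - 1) * Q ^ s * ∏ i ∈ range s, (Q ^ a - Q ^ i) := by
  rw [Finset.prod_range_succ', pow_zero, Finset.prod_congr rfl fun i _ => by
    rw [show Q ^ (a + 1) - Q ^ (i + 1) = Q * (Q ^ a - Q ^ i) by ring],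
    Finset.prod_mul_distrib, Finset.prod_const, card_range]
  ring

lemma gb_succ_succ (hQ : 1 < Q) {m s : ℕ} (hs : s ≤ m) :
    gb Q (m + 1) (s + 1) = gb Q m (s + 1) + Q ^ (m - s) * gb Q m s := by
  obtain ⟨t, rfl⟩ := Nat.exists_eq_add_of_le hs
  simp only [gb, Finset.prod_div_distrib]
  rw [prod_range_succ_pow_succ_sub, Finset.prod_range_succ (fun i => Q ^ (s + t) - Q ^ i),
    prod_range_succ_pow_succ_sub, Nat.add_sub_cancel_left]
  have hD := prod_range_pow_sub_ne_zero hQ s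
  have hs1 : Q ^ (s + 1) - 1 ≠ 0 := sub_ne_zero.2 (one_lt_pow₀ hQ s.succ_ne_zero).ne'
  have hQ0 : Q ≠ 0 := by positivity
  field_simp
  ring

lemma choose_two_succ (ℓ : ℕ) : (ℓ + 1).choose 2 = ℓ.choose 2 + ℓ := by
  rw [Nat.choose_succ_succ', Nat.choose_one_right, add_comm]

theorem sum_range_gb_mul_eq_prod (hQ : 1 < Q) (x y : ℚ) (m : ℕ) :
    ∑ ℓ ∈ range (m + 1),
        gb Q m ℓ * ((-1) ^ ℓ * Q ^ ℓ.choose 2 * x ^ (m - ℓ) * y ^ ℓ)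
      = ∏ i ∈ range m, (x - Q ^ i * y) := by
  induction m with
  | zero => simp [gb]
  | succ m ih =>
    rw [prod_range_succ, ← ih, sum_range_succ']
    have hpascal : ∀ ℓ ∈ range (m + 1),
        gb Q (m + 1) (ℓ + 1) *
            ((-1) ^ (ℓ + 1) * Q ^ (ℓ + 1).choose 2 * x ^ (m + 1 - (ℓ + 1)) * y ^ (ℓ + 1))
          = gb Q m (ℓ + 1) *
              ((-1) ^ (ℓ + 1) * Q ^ (ℓ + 1).choose 2 * x ^ (m + 1 - (ℓ + 1)) * y ^ (ℓ + 1))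
            - Q ^ m * y *
                (gb Q m ℓ * ((-1) ^ ℓ * Q ^ ℓ.choose 2 * x ^ (m - ℓ) * y ^ ℓ)) := by
      intro ℓ hℓ
      have hℓm : ℓ ≤ m := Nat.lt_succ_iff.1 (mem_range.1 hℓ)
      have hpow : Q ^ (m - ℓ) * Q ^ (ℓ + 1).choose 2 = Q ^ m * Q ^ ℓ.choose 2 := by
        rw [← pow_add, ← pow_add, choose_two_succ]; congr 1; omega
      rw [gb_succ_succ hQ hℓm, Nat.add_sub_add_right]
      linear_combination (-1) ^ (ℓ + 1) * gb Q m ℓ * x ^ (m - ℓ) * y ^ (ℓ + 1) * hpow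
    have hshift :
        ∑ ℓ ∈ range (m + 1), gb Q m (ℓ + 1) *
            ((-1) ^ (ℓ + 1) * Q ^ (ℓ + 1).choose 2 * x ^ (m + 1 - (ℓ + 1)) * y ^ (ℓ + 1))
          + gb Q m 0 * ((-1) ^ 0 * Q ^ (0 : ℕ).choose 2 * x ^ (m + 1 - 0) * y ^ 0)
        = x * ∑ ℓ ∈ range (m + 1),
            gb Q m ℓ * ((-1) ^ ℓ * Q ^ ℓ.choose 2 * x ^ (m - ℓ) * y ^ ℓ) := by
      rw [← sum_range_succ'
          (fun ℓ => gb Q m ℓ * ((-1) ^ ℓ * Q ^ ℓ.choose 2 * x ^ (m + 1 - ℓ) * y ^ ℓ)),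
        sum_range_succ, gb_eq_zero_of_lt Q m.lt_succ_self, zero_mul, add_zero, mul_sum]
      refine sum_congr rfl fun ℓ hℓ => ?_
      rw [Nat.sub_add_comm (Nat.lt_succ_iff.1 (mem_range.1 hℓ)), pow_succ]
      ring
    rw [sum_congr rfl hpascal, sum_sub_distrib, ← mul_sum,
      show gb Q (m + 1) 0 = gb Q m 0 by simp only [gb_zero_right]]
    linear_combination hshift

end GaussianBinomial

section Counting

variable {V : Type*} [AddCommGroup V] [Module F V]

noncomputable def linearIndependentSpanEquiv [FiniteDimensional F V] {r : ℕ}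
    (W : Submodule F V) (hW : finrank F W = r) :
    {s : {s : Fin r → V // LinearIndependent F s} // Submodule.span F (Set.range s.1) = W}
      ≃ {t : Fin r → W // LinearIndependent F t} where
  toFun s := ⟨fun i => ⟨s.1.1 i, s.2.le (Submodule.subset_span ⟨i, rfl⟩)⟩,
    LinearIndependent.of_comp W.subtype s.1.2⟩
  invFun t := ⟨⟨W.subtype ∘ t.1, t.2.map' W.subtype W.ker_subtype⟩, by
    rw [Set.range_comp, ← Submodule.map_span,
      t.2.span_eq_top_of_card_eq_finrank' (by simp [hW]), Submodule.map_top,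
      Submodule.range_subtype]⟩
  left_inv _ := rfl
  right_inv _ := rfl

variable [Finite V]

lemma card_linearIndependent_eq_card_mul (r : ℕ) :
    Nat.card {s : Fin r → V // LinearIndependent F s}
      = Nat.card {W : Submodule F V // finrank F W = r}
          * ∏ i : Fin r, (Fintype.card F ^ r - Fintype.card F ^ (i : ℕ)) := by
  classical
  have := Fintype.ofFinite {W : Submodule F V // finrank F W = r}
  let span (s : {s : Fin r → V // LinearIndependent F s}) :
      {W : Submodule F V // finrank F W = r} :=
    ⟨Submodule.span F (Set.range s.1), by rw [finrank_span_eq_card s.2, Fintype.card_fin]⟩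
  have hfiber (W : {W : Submodule F V // finrank F W = r}) :
      Nat.card {s // span s = W}
        = ∏ i : Fin r, (Fintype.card F ^ r - Fintype.card F ^ (i : ℕ)) := by
    rw [Nat.card_congr ((Equiv.subtypeEquivRight fun s => Subtype.ext_iff).trans
      (linearIndependentSpanEquiv W.1 W.2)), card_linearIndependent W.2.ge, W.2]
  rw [← Nat.card_congr (Equiv.sigmaFiberEquiv span), Nat.card_sigma, Fintype.sum_congr _ _ hfiber,
    sum_const, card_univ, smul_eq_mul, Nat.card_eq_fintype_card]

lemma cast_prod_pow_sub_pow {q : ℕ} (hq : 0 < q) {a r : ℕ} (hr : r ≤ a) :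
    ((∏ i : Fin r, (q ^ a - q ^ (i : ℕ)) : ℕ) : ℚ)
      = ∏ i ∈ range r, ((q : ℚ) ^ a - (q : ℚ) ^ i) := by
  rw [Nat.cast_prod, Fin.prod_univ_eq_prod_range (fun i => ((q ^ a - q ^ i : ℕ) : ℚ))]
  refine prod_congr rfl fun i hi => ?_
  rw [Nat.cast_sub (Nat.pow_le_pow_right hq ((mem_range.1 hi).le.trans hr))]
  push_cast
  rfl

lemma card_finrank_eq_gb {r : ℕ} (hr : r ≤ finrank F V) :
    (Nat.card {W : Submodule F V // finrank F W = r} : ℚ)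
      = gb (Fintype.card F) (finrank F V) r := by
  have hcount := congrArg (Nat.cast : ℕ → ℚ)
    (card_linearIndependent_eq_card_mul (F := F) (V := V) r)
  rw [card_linearIndependent hr, Nat.cast_mul, cast_prod_pow_sub_pow Fintype.card_pos hr,
    cast_prod_pow_sub_pow Fintype.card_pos le_rfl] at hcount
  rw [gb, prod_div_distrib, eq_div_iff (prod_range_pow_sub_ne_zero ?_ r), ← hcount]
  exact_mod_cast Fintype.one_lt_card

lemma finsum_finrank_eq_sum_gb (f : ℕ → ℚ) :
    ∑ᶠ W : Submodule F V, f (finrank F W)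
      = ∑ ℓ ∈ range (finrank F V + 1), gb (Fintype.card F) (finrank F V) ℓ * f ℓ := by
  classical
  have := Fintype.ofFinite (Submodule F V)
  rw [finsum_eq_sum_of_fintype,
    ← sum_fiberwise_of_maps_to (g := fun W : Submodule F V => finrank F W)
      fun (W : Submodule F V) _ => mem_range.2 (Nat.lt_succ_of_le W.finrank_le)]
  refine sum_congr rfl fun ℓ hℓ => ?_
  rw [← card_finrank_eq_gb (Nat.lt_succ_iff.1 (mem_range.1 hℓ)), Nat.card_eq_fintype_card,
    Fintype.card_subtype, ← nsmul_eq_mul, ← sum_const]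
  exact sum_congr rfl fun W hW => by rw [(mem_filter.1 hW).2]

end Counting

section Correspondence

variable {R M : Type*} [Ring R] [AddCommGroup M] [Module R M]

lemma finsum_mem_le_eq_finsum_quotient {α : Type*} [AddCommMonoid α] (K : Submodule R M)
    (g : Submodule R M → α) :
    ∑ᶠ J ∈ {J : Submodule R M | K ≤ J}, g J
      = ∑ᶠ W : Submodule R (M ⧸ K), g (W.comap K.mkQ) := by
  rw [← finsum_set_coe_eq_finsum_mem]
  exact (finsum_comp_equiv (Submodule.comapMkQRelIso K).toEquiv).symm

lemma finrank_comap_mkQ {V : Type*} [AddCommGroup V] [Module F V] [FiniteDimensional F V]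
    (K : Submodule F V) (W : Submodule F (V ⧸ K)) :
    finrank F (W.comap K.mkQ) = finrank F W + finrank F K := by
  have e := Submodule.quotientQuotientEquivQuotient K (W.comap K.mkQ) (Submodule.le_comap_mkQ K W)
  rw [Submodule.map_comap_eq_of_surjective K.mkQ_surjective] at e
  have hK := K.finrank_quotient_add_finrank
  have hW := W.finrank_quotient_add_finrank
  have hJ := (W.comap K.mkQ).finrank_quotient_add_finrank
  have := e.finrank_eq
  omega

end Correspondence

/-- Sum of the Möbius function times monomials over the interval `[K, E]` in the
subspace lattice of `E = F_q^n`. -/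
theorem mobius_interval_sum (n k : ℕ) (K : Submodule F (Fin n → F))
    (hK : Module.finrank F K = k) (x y : ℚ) :
    (∑ᶠ J ∈ {J : Submodule F (Fin n → F) | K ≤ J},
        (-1 : ℚ) ^ (Module.finrank F J - k) *
          (Fintype.card F : ℚ) ^ ((Module.finrank F J - k).choose 2) *
          x ^ (n - Module.finrank F J) * y ^ (Module.finrank F J))
      = y ^ k * ∏ i ∈ Finset.range (n - k), (x - (Fintype.card F : ℚ) ^ i * y) := by
  set q : ℚ := (Fintype.card F : ℚ)
  have hq : 1 < q := Nat.one_lt_cast.2 Fintype.one_lt_card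
  have hquot : finrank F ((Fin n → F) ⧸ K) = n - k := by
    have := K.finrank_quotient_add_finrank
    rw [finrank_fin_fun] at this
    omega
  calc _ = ∑ᶠ W : Submodule F ((Fin n → F) ⧸ K), y ^ k * ((-1) ^ finrank F W *
          q ^ (finrank F W).choose 2 * x ^ (n - k - finrank F W) * y ^ finrank F W) := by
        rw [finsum_mem_le_eq_finsum_quotient]
        refine finsum_congr fun W => ?_
        rw [finrank_comap_mkQ, hK, Nat.add_sub_cancel, Nat.sub_sub, add_comm k]
        ring
    _ = y ^ k * ∑ ℓ ∈ range (n - k + 1),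
          gb q (n - k) ℓ * ((-1) ^ ℓ * q ^ ℓ.choose 2 * x ^ (n - k - ℓ) * y ^ ℓ) := by
        rw [finsum_finrank_eq_sum_gb (fun d => y ^ k *
          ((-1) ^ d * q ^ d.choose 2 * x ^ (n - k - d) * y ^ d)), hquot, mul_sum]
        exact sum_congr rfl fun ℓ _ => mul_left_comm _ _ _
    _ = _ := by rw [sum_range_gb_mul_eq_prod hq]
end

section
/- Let P = (E, ρ) be a (q,m)-polymatroid on E = F_q^n equipped with the standard inner product, and let ρ*(J) := ρ(J^⊥) + m·dim J − ρ(E). Then the circuits of the dual polymatroid P* = (E, ρ*) are exactly the orthogonal complements of the hyperplanes of P, i.e. C(P*) = { H^⊥ : H a hyperplane of P }. -/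
set_option linter.unusedSectionVars false

open Finset Matrix

variable {F : Type} [Field F] [Fintype F]

/-!
A subspace `J` is independent in the dual exactly when `ρ(J^⊥) = ρ(E)`. Orthogonal complementation
is an inclusion-reversing involution, so it carries the minimal `J` with `ρ(J^⊥) ≠ ρ(E)` (the dual
circuits) to the maximal `H` with `ρ(H) ≠ ρ(E)`; as `ρ` is monotone, these are the hyperplanes.
-/

section DotProduct

variable {R ι : Type*} [CommRing R] [Fintype ι]

theorem dotProductBilin_isRefl :
    LinearMap.BilinForm.IsRefl (dotProductBilin R R : LinearMap.BilinForm R (ι → R)) :=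
  fun x y h => by simpa [dotProduct_comm] using h

theorem dotProductBilin_nondegenerate :
    (dotProductBilin R R : LinearMap.BilinForm R (ι → R)).Nondegenerate :=
  ⟨fun x hx => dotProduct_eq_zero x fun y => by simpa using hx y,
    fun y hy => dotProduct_eq_zero y fun x => by simpa [dotProduct_comm] using hy x⟩

end DotProduct

section Perp

variable {n : ℕ}

theorem perp_eq_orthogonal (J : Submodule F (Fin n → F)) :
    perp J = LinearMap.BilinForm.orthogonal (dotProductBilin F F) J := by
  ext x
  simp only [perp, Submodule.mem_iInf, LinearMap.mem_ker, LinearMap.BilinForm.mem_orthogonal_iff,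
    dotProductBilin_apply_apply, dotForm, LinearMap.coe_mk, AddHom.coe_mk, dotProduct,
    mul_comm, SetLike.mem_coe]

theorem perp_perp (J : Submodule F (Fin n → F)) : perp (perp J) = J := by
  rw [perp_eq_orthogonal, perp_eq_orthogonal]
  exact LinearMap.BilinForm.orthogonal_orthogonal dotProductBilin_nondegenerate
    dotProductBilin_isRefl J

theorem perp_anti {J K : Submodule F (Fin n → F)} (h : J ≤ K) : perp K ≤ perp J := by
  rw [perp_eq_orthogonal, perp_eq_orthogonal]
  exact LinearMap.BilinForm.orthogonal_le h

theorem perp_le_perp_iff {J K : Submodule F (Fin n → F)} : perp J ≤ perp K ↔ K ≤ J :=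
  ⟨fun h => by simpa only [perp_perp] using perp_anti h, perp_anti⟩

theorem perp_lt_perp_iff {J K : Submodule F (Fin n → F)} : perp J < perp K ↔ K < J := by
  simp only [lt_iff_le_not_ge, perp_le_perp_iff]

theorem minimal_comp_perp_iff {P : Submodule F (Fin n → F) → Prop}
    {D : Submodule F (Fin n → F)} :
    Minimal (fun J => P (perp J)) D ↔ Maximal P (perp D) := by
  simp only [minimal_iff_forall_lt, maximal_iff_forall_gt]
  refine and_congr_right fun _ => ⟨fun h H hH => ?_, fun h D' hD' => h (perp_lt_perp_iff.2 hD')⟩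
  rw [← perp_perp H] at hH ⊢
  exact h (perp_lt_perp_iff.1 hH)

end Perp

theorem dual_circuits_eq_perp_hyperplanes_general (n m : ℕ)
    (ρ : Submodule F (Fin n → F) → ℕ)
    (hR2 : ∀ A B : Submodule F (Fin n → F), A ≤ B → ρ A ≤ ρ B)
    (D : Submodule F (Fin n → F)) :
    (((ρ (perp D) : ℤ) + m * Module.finrank F D - ρ ⊤ ≠ (m * Module.finrank F D : ℤ)) ∧
      ∀ D' : Submodule F (Fin n → F), D' < D →
        (ρ (perp D') : ℤ) + m * Module.finrank F D' - ρ ⊤ = (m * Module.finrank F D' : ℤ))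
    ↔ ∃ H : Submodule F (Fin n → F),
        (ρ H < ρ ⊤ ∧ ∀ H' : Submodule F (Fin n → F), H < H' → ρ H' = ρ ⊤) ∧
        D = perp H := by
  have dual_indep_iff : ∀ J : Submodule F (Fin n → F),
      (ρ (perp J) : ℤ) + m * Module.finrank F J - ρ ⊤ = (m * Module.finrank F J : ℤ) ↔
        ρ (perp J) = ρ ⊤ := fun J => by omega
  have rank_lt_top_iff : ∀ H, ρ H < ρ ⊤ ↔ ρ H ≠ ρ ⊤ := fun H => (hR2 H ⊤ le_top).lt_iff_ne
  calc _ ↔ Minimal (fun J => ρ (perp J) ≠ ρ ⊤) D := by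
        simp only [minimal_iff_forall_lt, ne_eq, dual_indep_iff, not_not]
    _ ↔ Maximal (fun H => ρ H ≠ ρ ⊤) (perp D) :=
        minimal_comp_perp_iff (P := fun H => ρ H ≠ ρ ⊤)
    _ ↔ _ := by
        simp only [maximal_iff_forall_gt, rank_lt_top_iff, not_not]
        refine ⟨fun h => ⟨perp D, h, (perp_perp D).symm⟩, ?_⟩
        rintro ⟨H, hH, rfl⟩
        rwa [perp_perp]

/-- The circuits of the dual `(q,m)`-polymatroid are exactly the orthogonal
complements of the hyperplanes of `P`. Here the dual rank function is
`ρ*(J) = ρ(J^⊥) + m·dim J − ρ(E)`, a subspace `I` is independent for the dual if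
`ρ*(I) = m·dim I` (and dependent otherwise), a circuit of the dual is a dependent
subspace all of whose proper subspaces are independent, and a hyperplane of `P`
is a subspace `H` with `ρ(H) < ρ(⊤)` such that every strictly larger subspace has
full rank. -/
theorem dual_circuits_eq_perp_hyperplanes (n m : ℕ)
    (ρ : Submodule F (Fin n → F) → ℕ)
    (hR1 : ∀ A : Submodule F (Fin n → F), ρ A ≤ m * Module.finrank F A)
    (hR2 : ∀ A B : Submodule F (Fin n → F), A ≤ B → ρ A ≤ ρ B)
    (hR3 : ∀ A B : Submodule F (Fin n → F), ρ (A ⊔ B) + ρ (A ⊓ B) ≤ ρ A + ρ B)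
    (D : Submodule F (Fin n → F)) :
    (((ρ (perp D) : ℤ) + m * Module.finrank F D - ρ ⊤ ≠ (m * Module.finrank F D : ℤ)) ∧
      ∀ D' : Submodule F (Fin n → F), D' < D →
        (ρ (perp D') : ℤ) + m * Module.finrank F D' - ρ ⊤ = (m * Module.finrank F D' : ℤ))
    ↔ ∃ H : Submodule F (Fin n → F),
        (ρ H < ρ ⊤ ∧ ∀ H' : Submodule F (Fin n → F), H < H' → ρ H' = ρ ⊤) ∧
        D = perp H :=
  dual_circuits_eq_perp_hyperplanes_general n m ρ hR2 D
end

section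
/- Let P = (E, ρ) be a (q,m)-polymatroid on E = F_q^n with ρ(E) < mn. Then P has a circuit of dimension at most floor(ρ(E)/m) + 1; equivalently, the girth g(P) (minimum dimension of a circuit) satisfies g(P) ≤ floor(ρ(E)/m) + 1. -/
/-!
A circuit `D` (a minimal dependent subspace) exists because subspaces of a finite-dimensional
space are well-founded under `<`, and `E` itself is dependent. Every hyperplane `H` of `D` is
independent, so `m (dim D - 1) = ρ H ≤ ρ E` by monotonicity, i.e. `dim D ≤ ⌊ρ(E)/m⌋ + 1`.
-/

open Module

section

variable {K V : Type*} [DivisionRing K] [AddCommGroup V] [Module K V]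

namespace Submodule

theorem exists_lt_finrank_eq (D : Submodule K V) {k : ℕ} (hk : k < finrank K D) :
    ∃ D' < D, finrank K D' = k := by
  obtain ⟨f, hf⟩ := exists_linearIndependent_of_le_finrank hk.le
  have hf' : LinearIndependent K (D.subtype ∘ f) := hf.map' D.subtype D.ker_subtype
  have hle : span K (Set.range (D.subtype ∘ f)) ≤ D := by
    rw [span_le]
    rintro _ ⟨i, rfl⟩
    exact (f i).2
  have hrank : finrank K (span K (Set.range (D.subtype ∘ f))) = k := by
    rw [finrank_span_eq_card hf', Fintype.card_fin]
  refine ⟨_, lt_of_le_of_ne hle fun heq => ?_, hrank⟩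
  rw [heq] at hrank
  omega

end Submodule

theorem finrank_le_div_add_one_of_minimal_dependent {ρ : Submodule K V → ℕ} {m : ℕ}
    (hρ : Monotone ρ) (hm : 0 < m) {D : Submodule K V}
    (hD : Minimal (fun A => ρ A ≠ m * finrank K A) D) :
    finrank K D ≤ ρ ⊤ / m + 1 := by
  rcases Nat.eq_zero_or_pos (finrank K D) with hzero | hpos
  · exact hzero ▸ Nat.zero_le _
  obtain ⟨H, hHD, hH⟩ := D.exists_lt_finrank_eq (Nat.sub_lt hpos one_pos)
  have hindep : ρ H = m * (finrank K D - 1) := hH ▸ not_not.mp (hD.not_prop_of_lt hHD)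
  have hbound : (finrank K D - 1) * m ≤ ρ ⊤ := by
    rw [mul_comm, ← hindep]
    exact hρ le_top
  have hdiv := (Nat.le_div_iff_mul_le hm).mpr hbound
  omega

end

theorem exists_small_circuit_general {F : Type} [Field F] (n m : ℕ)
    (ρ : Submodule F (Fin n → F) → ℕ)
    (hR2 : ∀ A B : Submodule F (Fin n → F), A ≤ B → ρ A ≤ ρ B)
    (h : ρ ⊤ < m * n) :
    ∃ D : Submodule F (Fin n → F),
      (ρ D ≠ m * Module.finrank F D ∧
        ∀ D' : Submodule F (Fin n → F), D' < D → ρ D' = m * Module.finrank F D') ∧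
      Module.finrank F D ≤ ρ ⊤ / m + 1 := by
  have htop : ρ ⊤ ≠ m * finrank F (⊤ : Submodule F (Fin n → F)) := by
    rw [finrank_top, finrank_fin_fun]
    exact h.ne
  obtain ⟨D, hD⟩ := exists_minimal_of_wellFoundedLT (fun A => ρ A ≠ m * finrank F A) ⟨⊤, htop⟩
  have hm : 0 < m := Nat.pos_of_mul_pos_right (Nat.zero_lt_of_lt h)
  exact ⟨D, ⟨hD.prop, fun D' hlt => not_not.mp (hD.not_prop_of_lt hlt)⟩,
    finrank_le_div_add_one_of_minimal_dependent (fun A B => hR2 A B) hm hD⟩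

/-- A `(q,m)`-polymatroid with `ρ(E) < mn` has a circuit of dimension at most
`⌊ρ(E)/m⌋ + 1`. -/
theorem exists_small_circuit {F : Type} [Field F] [Fintype F] (n m : ℕ)
    (ρ : Submodule F (Fin n → F) → ℕ)
    (hR1 : ∀ A : Submodule F (Fin n → F), ρ A ≤ m * Module.finrank F A)
    (hR2 : ∀ A B : Submodule F (Fin n → F), A ≤ B → ρ A ≤ ρ B)
    (hR3 : ∀ A B : Submodule F (Fin n → F), ρ (A ⊔ B) + ρ (A ⊓ B) ≤ ρ A + ρ B)
    (h : ρ ⊤ < m * n) :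
    ∃ D : Submodule F (Fin n → F),
      (ρ D ≠ m * Module.finrank F D ∧
        ∀ D' : Submodule F (Fin n → F), D' < D → ρ D' = m * Module.finrank F D') ∧
      Module.finrank F D ≤ ρ ⊤ / m + 1 :=
  exists_small_circuit_general n m ρ hR2 h
end

section
/- Let C ≤ Mat_{n×m}(F_q) be a rank-metric code and r ≥ 0 an integer. Then the minimal members (under inclusion) of the family { Supp(D) : D an r-dimensional subcode of C } coincide with the minimal members of the family { J ≤ F_q^n : dim C(J) ≥ r }. -/
set_option linter.unusedSectionVars false

open Finset Matrix

variable {F : Type} [Field F] [Fintype F]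

lemma supp_le_iff {n m : ℕ} {D : Submodule F (Matrix (Fin n) (Fin m) F)}
    {J : Submodule F (Fin n → F)} :
    Supp D ≤ J ↔ ∀ M ∈ D, colspace M ≤ J := by
  simp [Supp, iSup_le_iff]

lemma le_codeSub_iff {n m : ℕ} {C D : Submodule F (Matrix (Fin n) (Fin m) F)}
    {J : Submodule F (Fin n → F)} :
    D ≤ codeSub C J ↔ D ≤ C ∧ ∀ M ∈ D, colspace M ≤ J := by
  constructor
  · intro h
    exact ⟨fun M hM => (h hM).1, fun M hM => (h hM).2⟩
  · rintro ⟨h1, h2⟩ M hM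
    exact ⟨h1 hM, h2 M hM⟩

lemma key1 {n m : ℕ} {C : Submodule F (Matrix (Fin n) (Fin m) F)} {r : ℕ}
    {W : Submodule F (Fin n → F)}
    (h : ∃ D : Submodule F (Matrix (Fin n) (Fin m) F),
      D ≤ C ∧ Module.finrank F D = r ∧ Supp D = W) :
    r ≤ Module.finrank F (codeSub C W) := by
  obtain ⟨D, hDC, hDr, hDW⟩ := h
  have hle : D ≤ codeSub C W := by
    rw [le_codeSub_iff]
    refine ⟨hDC, ?_⟩
    rw [← supp_le_iff, hDW]
  rw [← hDr]
  exact Submodule.finrank_mono hle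

lemma key2 {n m : ℕ} {C : Submodule F (Matrix (Fin n) (Fin m) F)} {r : ℕ}
    {J : Submodule F (Fin n → F)}
    (h : r ≤ Module.finrank F (codeSub C J)) :
    ∃ W : Submodule F (Fin n → F),
      (∃ D : Submodule F (Matrix (Fin n) (Fin m) F),
        D ≤ C ∧ Module.finrank F D = r ∧ Supp D = W) ∧ W ≤ J := by
  obtain ⟨f, hf⟩ := exists_linearIndependent_of_le_finrank h
  have hf' : LinearIndependent F ((codeSub C J).subtype ∘ f) :=
    hf.map' (codeSub C J).subtype (Submodule.ker_subtype _)
  set D : Submodule F (Matrix (Fin n) (Fin m) F) :=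
    Submodule.span F (Set.range ((codeSub C J).subtype ∘ f)) with hD
  have hDsub : D ≤ codeSub C J := by
    rw [hD, Submodule.span_le]
    rintro _ ⟨i, rfl⟩
    exact (f i).2
  refine ⟨Supp D, ⟨D, hDsub.trans (le_codeSub_iff.mp le_rfl).1, ?_, rfl⟩, ?_⟩
  · rw [hD, finrank_span_eq_card hf']
    simp
  · rw [supp_le_iff]
    exact fun M hM => (hDsub hM).2

/-- The minimal higher rank-supports of `r`-dimensional subcodes of `C` coincide
with the minimal subspaces `J` with `dim C(J) ≥ r`. -/
theorem min_supports_eq_min_dim_ge (n m : ℕ)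
    (C : Submodule F (Matrix (Fin n) (Fin m) F)) (r : ℕ) :
    {W : Submodule F (Fin n → F) |
        Minimal (fun W => ∃ D : Submodule F (Matrix (Fin n) (Fin m) F),
          D ≤ C ∧ Module.finrank F D = r ∧ Supp D = W) W}
      = {J : Submodule F (Fin n → F) |
          Minimal (fun J => r ≤ Module.finrank F (codeSub C J)) J} := by
  ext W
  simp only [Set.mem_setOf_eq]
  constructor
  · rintro ⟨hP, hmin⟩
    refine ⟨key1 hP, ?_⟩
    intro y hy hyW
    obtain ⟨W', hW', hW'y⟩ := key2 hy
    exact (hmin hW' (hW'y.trans hyW)).trans hW'y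
  · rintro ⟨hQ, hmin⟩
    obtain ⟨W', hW', hW'W⟩ := key2 hQ
    have hWW' : W ≤ W' := hmin (key1 hW') hW'W
    have : W' = W := le_antisymm hW'W hWW'
    refine ⟨this ▸ hW', ?_⟩
    intro y hy hyW
    exact hmin (key1 hy) hyW
end

section
/- For all integers 1 ≤ t ≤ r and every nonnegative integer a, the Gaussian binomial coefficient satisfies [a choose r]_q = (1/g_r(q^r,1)) · Σ_{i=0}^{r} (−1)^{r−i} q^{binom(r−i,2) + i(t−1)} [r choose i]_q q^{i·max(0, a−t+1)}, where g_r(X,Y) = ∏_{j=0}^{r−1}(X − q^j Y). -/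
open Finset

noncomputable def F (q : ℚ) (m : ℕ) : ℚ := ∏ j ∈ Finset.range m, (q ^ (j+1) - 1)

variable {q : ℚ}

lemma pow_sub_one_ne (hq : 1 < q) (j : ℕ) : q ^ (j+1) - 1 ≠ 0 := by
  have : (1:ℚ) < q ^ (j+1) := one_lt_pow₀ hq (by omega)
  linarith

lemma F_ne_zero (hq : 1 < q) (m : ℕ) : F q m ≠ 0 :=
  Finset.prod_ne_zero_iff.2 fun j _ => pow_sub_one_ne hq j

lemma pow_sub_pow_ne (hq : 1 < q) {i r : ℕ} (h : i < r) : q ^ r - q ^ i ≠ 0 := by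
  have := pow_lt_pow_right₀ hq h
  linarith

lemma F_split (hq : 1 < q) : ∀ k n : ℕ, k ≤ n →
    F q n = F q (n - k) * ∏ j ∈ Finset.range k, (q ^ (n - j) - 1) := by
  intro k
  induction k with
  | zero => simp [F]
  | succ k ih =>
    intro n hn
    rw [Finset.prod_range_succ, ih n (by omega)]
    have h1 : n - k = (n - (k+1)) + 1 := by omega
    rw [h1, F, Finset.prod_range_succ, ← F]
    have h2 : n - (k+1) + 1 = n - k := by omega
    rw [h2]
    ring

lemma gb_eq_F (hq : 1 < q) {k n : ℕ} (hk : k ≤ n) :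
    gb q n k = F q n / (F q k * F q (n - k)) := by
  have hq0 : q ≠ 0 := by positivity
  have key : ∀ j < k, (q ^ n - q ^ j) / (q ^ k - q ^ j)
      = (q ^ (n - j) - 1) / (q ^ (k - j) - 1) := by
    intro j hj
    have hn : n = j + (n - j) := by omega
    have hk' : k = j + (k - j) := by omega
    rw [show q^n = q^j * q^(n-j) by rw [← pow_add, ← hn],
        show q^k = q^j * q^(k-j) by rw [← pow_add, ← hk']]
    rw [show q^j * q^(n-j) - q^j = q^j * (q^(n-j) - 1) by ring,
        show q^j * q^(k-j) - q^j = q^j * (q^(k-j) - 1) by ring]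
    exact mul_div_mul_left _ _ (pow_ne_zero j hq0)
  rw [gb, Finset.prod_congr rfl (fun j hj => key j (Finset.mem_range.1 hj)),
      Finset.prod_div_distrib]
  have hden : ∏ j ∈ Finset.range k, (q ^ (k - j) - 1) = F q k := by
    rw [F, ← Finset.prod_range_reflect]
    apply Finset.prod_congr rfl
    intro j hj
    have : k - (k - 1 - j) = j + 1 := by
      have := Finset.mem_range.1 hj; omega
    rw [this]
  have hnum : ∏ j ∈ Finset.range k, (q ^ (n - j) - 1) = F q n / F q (n - k) := by
    rw [F_split hq k n hk]
    field_simp [F_ne_zero hq]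
  rw [hden, hnum, div_div, mul_comm]

lemma gb_zero_right_s12 (n : ℕ) : gb q n 0 = 1 := by simp [gb]

lemma gb_self (hq : 1 < q) (n : ℕ) : gb q n n = 1 := by
  rw [gb]
  apply Finset.prod_eq_one
  intro i hi
  exact div_self (pow_sub_pow_ne hq (Finset.mem_range.1 hi))

lemma gb_eq_zero (hq : 1 < q) {n k : ℕ} (h : n < k) : gb q n k = 0 := by
  rw [gb]
  apply Finset.prod_eq_zero (Finset.mem_range.2 h)
  simp

lemma gb_pascal (hq : 1 < q) (n k : ℕ) :
    gb q (n+1) (k+1) = gb q n k + q ^ (k+1) * gb q n (k+1) := by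
  rcases lt_trichotomy (k+1) (n+1) with h | h | h
  · -- k + 1 ≤ n
    have hk : k + 1 ≤ n := by omega
    rw [gb_eq_F hq (by omega : k+1 ≤ n+1), gb_eq_F hq (by omega : k ≤ n),
        gb_eq_F hq hk]
    have e1 : n + 1 - (k+1) = n - k := by omega
    have e2 : n - k = (n - (k+1)) + 1 := by omega
    rw [e1]
    have hpow : q ^ (n+1) = q ^ (k+1) * q ^ (n-k) := by
      rw [← pow_add]; congr 1; omega
    have hFn1 : F q (n+1) = F q n * (q ^ (k+1) * q ^ (n-k) - 1) := by
      rw [F, Finset.prod_range_succ, ← F, ← hpow]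
    have hFk1 : F q (k+1) = F q k * (q ^ (k+1) - 1) := by
      rw [F, Finset.prod_range_succ, ← F]
    have hFnk : F q (n - k) = F q (n - (k+1)) * (q ^ (n - k) - 1) := by
      rw [e2, F, Finset.prod_range_succ, ← F, ← e2]
    rw [hFn1, hFk1, hFnk]
    have h1 : q ^ (k+1) - 1 ≠ 0 := pow_sub_one_ne hq k
    have h2 : q ^ (n-k) - 1 ≠ 0 := by rw [e2]; exact pow_sub_one_ne hq _
    have h3 : F q k ≠ 0 := F_ne_zero hq k
    have h4 : F q (n - (k+1)) ≠ 0 := F_ne_zero hq (n - (k+1))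
    field_simp
    ring
  · -- k = n
    have hk : k = n := by omega
    subst hk
    rw [gb_self hq, gb_self hq, gb_eq_zero hq (show k < k + 1 by omega)]
    ring
  · rw [gb_eq_zero hq (show n+1 < k+1 by omega), gb_eq_zero hq (show n < k by omega),
        gb_eq_zero hq (show n < k+1 by omega)]
    ring

lemma qbt (hq : 1 < q) (r : ℕ) (x : ℚ) :
    ∏ j ∈ Finset.range r, (x - q ^ j)
      = ∑ i ∈ Finset.range (r+1),
          (-1:ℚ) ^ (r - i) * q ^ ((r - i).choose 2) * gb q r i * x ^ i := by
  induction r with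
  | zero => simp [gb]
  | succ r ih =>
    have cterm : ∀ i ≤ r,
        (-1:ℚ) ^ (r + 1 - (i+1)) * q ^ ((r + 1 - (i+1)).choose 2) * gb q (r+1) (i+1)
          = (-1:ℚ) ^ (r - i) * q ^ ((r - i).choose 2) * gb q r i
            - q ^ r * ((-1:ℚ) ^ (r - (i+1)) * q ^ ((r - (i+1)).choose 2) * gb q r (i+1)) := by
      intro i hi
      have e0 : r + 1 - (i+1) = r - i := by omega
      rw [e0, gb_pascal hq]
      rcases eq_or_lt_of_le hi with h | h
      · subst h
        rw [gb_eq_zero hq (show i < i + 1 by omega)]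
        ring
      · obtain ⟨m, hm⟩ : ∃ m, r - i = m + 1 := ⟨r - i - 1, by omega⟩
        have e1 : r - (i+1) = m := by omega
        have e2 : (m+1).choose 2 = m + m.choose 2 := by
          rw [Nat.choose_succ_succ]; simp
        have e3 : r = m + (i + 1) := by omega
        rw [hm, e1, e2]
        rw [show (-1:ℚ)^(m+1) = -(-1:ℚ)^m by ring,
            show q ^ (m + m.choose 2) = q ^ m * q ^ m.choose 2 by rw [pow_add],
            show q ^ r = q ^ m * q ^ (i+1) by rw [← pow_add, ← e3]]
        ring
    rw [Finset.prod_range_succ, ih]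
    rw [Finset.sum_range_succ' (fun i => (-1:ℚ) ^ (r + 1 - i) * q ^ ((r + 1 - i).choose 2) * gb q (r+1) i * x ^ i) (r+1)]
    have hsum : ∑ i ∈ Finset.range (r+1),
        (-1:ℚ) ^ (r + 1 - (i+1)) * q ^ ((r + 1 - (i+1)).choose 2) * gb q (r+1) (i+1) * x ^ (i+1)
        = ∑ i ∈ Finset.range (r+1),
          (((-1:ℚ) ^ (r - i) * q ^ ((r - i).choose 2) * gb q r i) * x ^ (i+1)
            - q ^ r * (((-1:ℚ) ^ (r - (i+1)) * q ^ ((r - (i+1)).choose 2) * gb q r (i+1)) * x ^ (i+1))) := by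
      apply Finset.sum_congr rfl
      intro i hi
      rw [cterm i (by have := Finset.mem_range.1 hi; omega)]
      ring
    rw [hsum, Finset.sum_sub_distrib]
    set f : ℕ → ℚ := fun i => (-1:ℚ) ^ (r - i) * q ^ ((r - i).choose 2) * gb q r i * x ^ i with hf
    have hx : ∑ i ∈ Finset.range (r+1),
        ((-1:ℚ) ^ (r - i) * q ^ ((r - i).choose 2) * gb q r i) * x ^ (i+1)
        = x * ∑ i ∈ Finset.range (r+1), f i := by
      rw [Finset.mul_sum]
      apply Finset.sum_congr rfl
      intro i _
      simp only [hf]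
      try ring
    have hftop : f (r+1) = 0 := by
      simp only [hf, gb_eq_zero hq (show r < r + 1 by omega)]; ring
    have hkey : (∑ i ∈ Finset.range (r+1), f (i+1)) + f 0
        = (∑ i ∈ Finset.range (r+1), f i) + f (r+1) :=
      (Finset.sum_range_succ' f (r+1)).symm.trans (Finset.sum_range_succ f (r+1))
    have hshift : ∑ i ∈ Finset.range (r+1),
        q ^ r * (((-1:ℚ) ^ (r - (i+1)) * q ^ ((r - (i+1)).choose 2) * gb q r (i+1)) * x ^ (i+1))
        = q ^ r * ((∑ i ∈ Finset.range (r+1), f i) - f 0) := by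
      rw [← Finset.mul_sum]
      congr 1
      have : ∑ i ∈ Finset.range (r+1),
          ((-1:ℚ) ^ (r - (i+1)) * q ^ ((r - (i+1)).choose 2) * gb q r (i+1)) * x ^ (i+1)
          = ∑ i ∈ Finset.range (r+1), f (i+1) := by
        apply Finset.sum_congr rfl
        intro i _
        simp only [hf]
        try ring
      rw [this]
      rw [hftop] at hkey
      linarith
    rw [hx, hshift]
    have hc0 : (-1:ℚ) ^ (r + 1 - 0) * q ^ ((r + 1 - 0).choose 2) * gb q (r+1) 0 * x ^ 0
        = - (q ^ r * f 0) := by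
      simp only [hf, gb_zero_right_s12, Nat.sub_zero]
      have : (r+1).choose 2 = r + r.choose 2 := by
        rw [Nat.choose_succ_succ]; simp
      rw [this, pow_add]
      ring
    rw [hc0]
    ring

/-- Expansion of the Gaussian binomial coefficient:
`[a choose r]_q = (1/g_r(q^r,1)) ∑_{i=0}^r (−1)^{r−i} q^{binom(r−i,2)+i(t−1)}
[r choose i]_q q^{i·max(0,a−t+1)}`; note `a + 1 - t = max 0 (a - t + 1)` in `ℕ`. -/
theorem gaussian_binomial_expansion (q : ℕ) (hq : 1 < q) (t r a : ℕ)
    (ht : 1 ≤ t) (htr : t ≤ r) :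
    gb (q : ℚ) a r
      = (1 / ∏ j ∈ Finset.range r, ((q : ℚ) ^ r - (q : ℚ) ^ j)) *
          ∑ i ∈ Finset.range (r + 1),
            (-1 : ℚ) ^ (r - i) * (q : ℚ) ^ ((r - i).choose 2 + i * (t - 1)) *
              gb (q : ℚ) r i * (q : ℚ) ^ (i * (a + 1 - t)) := by
  have hq' : (1:ℚ) < (q:ℚ) := by exact_mod_cast hq
  have hsum : ∑ i ∈ Finset.range (r + 1),
      (-1 : ℚ) ^ (r - i) * (q : ℚ) ^ ((r - i).choose 2 + i * (t - 1)) *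
        gb (q : ℚ) r i * (q : ℚ) ^ (i * (a + 1 - t))
      = ∑ i ∈ Finset.range (r + 1),
        (-1 : ℚ) ^ (r - i) * (q : ℚ) ^ ((r - i).choose 2) * gb (q : ℚ) r i
          * ((q:ℚ) ^ ((t - 1) + (a + 1 - t))) ^ i := by
    apply Finset.sum_congr rfl
    intro i _
    have : (q:ℚ) ^ ((r - i).choose 2 + i * (t-1)) * (q:ℚ) ^ (i * (a+1-t))
        = (q:ℚ) ^ ((r - i).choose 2) * ((q:ℚ) ^ ((t-1) + (a+1-t))) ^ i := by
      rw [← pow_mul, ← pow_add, ← pow_add]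
      congr 1
      ring
    calc (-1 : ℚ) ^ (r - i) * (q : ℚ) ^ ((r - i).choose 2 + i * (t - 1)) *
          gb (q : ℚ) r i * (q : ℚ) ^ (i * (a + 1 - t))
        = (-1 : ℚ) ^ (r - i) * gb (q : ℚ) r i *
            ((q : ℚ) ^ ((r - i).choose 2 + i * (t - 1)) * (q : ℚ) ^ (i * (a + 1 - t))) := by ring
      _ = _ := by rw [this]; ring
  rw [hsum, ← qbt hq' r ((q:ℚ) ^ ((t - 1) + (a + 1 - t)))]
  have hgbm : gb (q:ℚ) ((t - 1) + (a + 1 - t)) r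
      = (1 / ∏ j ∈ Finset.range r, ((q : ℚ) ^ r - (q : ℚ) ^ j)) *
        ∏ j ∈ Finset.range r, ((q:ℚ) ^ ((t - 1) + (a + 1 - t)) - (q:ℚ) ^ j) := by
    rw [gb, Finset.prod_div_distrib]
    field_simp
  rw [← hgbm]
  rcases le_or_gt t (a+1) with h | h
  · have e : (t - 1) + (a + 1 - t) = a := by omega
    rw [e]
  · have e : (t - 1) + (a + 1 - t) = t - 1 := by omega
    rw [gb_eq_zero hq' (show a < r by omega), e,
        gb_eq_zero hq' (show t - 1 < r by omega)]
end

section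
/- Let C ≤ Mat_{n×m}(F_q) be a rank-metric code of dimension k, and let C^⊥ be its trace dual. For every subspace J ≤ F_q^n, dim C(J) = dim C^⊥(J^⊥) + k − m(n − dim J). -/
set_option linter.unusedSectionVars false

open Finset Matrix

variable {F : Type} [Field F] [Fintype F]

section Aux

variable {n m : ℕ}

lemma mem_codeSub {C : Submodule F (Matrix (Fin n) (Fin m) F)} {J : Submodule F (Fin n → F)}
    {M : Matrix (Fin n) (Fin m) F} : M ∈ codeSub C J ↔ M ∈ C ∧ colspace M ≤ J := Iff.rfl

lemma colspace_le_iff {M : Matrix (Fin n) (Fin m) F} {J : Submodule F (Fin n → F)} :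
    colspace M ≤ J ↔ ∀ j, Mᵀ j ∈ J := by
  rw [colspace, Submodule.span_le]
  constructor
  · intro h j; exact h ⟨j, rfl⟩
  · rintro h _ ⟨j, rfl⟩; exact h j

lemma traceForm_apply' (M N : Matrix (Fin n) (Fin m) F) :
    traceForm M N = ∑ j, ∑ i, M i j * N i j := by
  show Matrix.trace (M * Nᵀ) = _
  rw [Matrix.trace]
  simp only [Matrix.diag, Matrix.mul_apply, Matrix.transpose_apply]
  rw [Finset.sum_comm]

lemma traceForm_comm (M N : Matrix (Fin n) (Fin m) F) :
    traceForm M N = traceForm N M := by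
  rw [traceForm_apply', traceForm_apply']
  exact Finset.sum_congr rfl fun j _ => Finset.sum_congr rfl fun i _ => mul_comm _ _

lemma mem_dualCode {C : Submodule F (Matrix (Fin n) (Fin m) F)}
    {N : Matrix (Fin n) (Fin m) F} :
    N ∈ dualCode C ↔ ∀ M ∈ C, traceForm M N = 0 := by
  simp [dualCode, Submodule.mem_iInf]

lemma mem_perp {J : Submodule F (Fin n → F)} {x : Fin n → F} :
    x ∈ perp J ↔ ∀ y ∈ J, dotForm y x = 0 := by
  simp [perp, Submodule.mem_iInf]

/-- `traceForm` as a linear map to the dual. -/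
noncomputable def traceFormL (n m : ℕ) :
    Matrix (Fin n) (Fin m) F →ₗ[F] Module.Dual F (Matrix (Fin n) (Fin m) F) where
  toFun := traceForm
  map_add' A B := by
    ext N
    show Matrix.trace ((A + B) * Nᵀ) = Matrix.trace (A * Nᵀ) + Matrix.trace (B * Nᵀ)
    rw [Matrix.add_mul, Matrix.trace_add]
  map_smul' c A := by
    ext N
    show Matrix.trace ((c • A) * Nᵀ) = c • Matrix.trace (A * Nᵀ)
    rw [Matrix.smul_mul, Matrix.trace_smul]

lemma traceFormL_injective : Function.Injective (traceFormL (F := F) n m) := by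
  rw [← LinearMap.ker_eq_bot, Submodule.eq_bot_iff]
  intro M hM
  have h : ∀ i j, traceForm M (Matrix.single i j 1) = 0 := by
    intro i j
    have : traceFormL (F := F) n m M = 0 := hM
    rw [show traceForm M = traceFormL (F := F) n m M from rfl, this]
    rfl
  ext i j
  have := h i j
  rw [traceForm_apply'] at this
  exact ((by simpa [Matrix.single, ite_and, Finset.sum_ite_eq] using this.symm : (0:F) = M i j)).symm

/-- `traceForm` as a linear equivalence to the dual. -/
noncomputable def traceFormEquiv (n m : ℕ) :
    Matrix (Fin n) (Fin m) F ≃ₗ[F] Module.Dual F (Matrix (Fin n) (Fin m) F) :=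
  LinearEquiv.ofBijective (traceFormL n m)
    ⟨traceFormL_injective,
      (LinearMap.injective_iff_surjective_of_finrank_eq_finrank
        (Subspace.dual_finrank_eq).symm).mp traceFormL_injective⟩

lemma dualCode_eq_comap (X : Submodule F (Matrix (Fin n) (Fin m) F)) :
    dualCode X = X.dualAnnihilator.comap (traceFormEquiv (F := F) n m).toLinearMap := by
  ext N
  rw [mem_dualCode, Submodule.mem_comap, Submodule.mem_dualAnnihilator]
  constructor
  · intro h M hM
    rw [show (traceFormEquiv (F := F) n m).toLinearMap N M = traceForm N M from rfl,
      traceForm_comm]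
    exact h M hM
  · intro h M hM
    rw [traceForm_comm]
    exact h M hM

lemma finrank_dualCode_add (X : Submodule F (Matrix (Fin n) (Fin m) F)) :
    Module.finrank F (dualCode X) + Module.finrank F X = n * m := by
  have h1 : Module.finrank F (dualCode X) = Module.finrank F X.dualAnnihilator := by
    rw [dualCode_eq_comap]
    exact LinearEquiv.finrank_eq (LinearEquiv.ofSubmodule' _ _)
  have h2 : Module.finrank F X.dualAnnihilator
      = Module.finrank F (Matrix (Fin n) (Fin m) F ⧸ X) :=
    (LinearEquiv.finrank_eq (Subspace.quotEquivAnnihilator X)).symm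
  rw [h1, h2, Submodule.finrank_quotient_add_finrank, Module.finrank_matrix]
  simp

lemma codeSub_eq_inf (C : Submodule F (Matrix (Fin n) (Fin m) F)) (J : Submodule F (Fin n → F)) :
    codeSub C J = C ⊓ codeSub ⊤ J := by
  ext M
  simp [mem_codeSub, Submodule.mem_inf]

lemma dualCode_sup (X Y : Submodule F (Matrix (Fin n) (Fin m) F)) :
    dualCode (X ⊔ Y) = dualCode X ⊓ dualCode Y := by
  ext N
  simp only [mem_dualCode, Submodule.mem_inf]
  constructor
  · intro h
    exact ⟨fun M hM => h M (Submodule.mem_sup_left hM),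
           fun M hM => h M (Submodule.mem_sup_right hM)⟩
  · rintro ⟨h1, h2⟩ M hM
    obtain ⟨a, ha, b, hb, rfl⟩ := Submodule.mem_sup.1 hM
    have hadd : traceForm (a + b) N = traceForm a N + traceForm b N :=
      LinearMap.congr_fun ((traceFormL (F := F) n m).map_add a b) N
    rw [hadd, h1 a ha, h2 b hb, add_zero]

lemma dualCode_codeSubTop (J : Submodule F (Fin n → F)) :
    dualCode (codeSub (⊤ : Submodule F (Matrix (Fin n) (Fin m) F)) J) = codeSub ⊤ (perp J) := by
  ext N
  rw [mem_dualCode, mem_codeSub]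
  constructor
  · intro h
    refine ⟨Submodule.mem_top, colspace_le_iff.2 fun j => mem_perp.2 fun y hy => ?_⟩
    set M : Matrix (Fin n) (Fin m) F := Matrix.of fun i j' => if j' = j then y i else 0
      with hMdef
    have hMcol : ∀ j', Mᵀ j' ∈ J := by
      intro j'
      have hcolval : Mᵀ j' = if j' = j then y else 0 := by
        funext i; simp [hMdef, Matrix.transpose_apply]; split <;> rfl
      rw [hcolval]
      split
      · exact hy
      · exact J.zero_mem
    have h0 := h M ⟨Submodule.mem_top, colspace_le_iff.2 hMcol⟩
    rw [traceForm_apply'] at h0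
    have heq : ∑ j', ∑ i, M i j' * N i j' = dotForm y (Nᵀ j) := by
      rw [show dotForm y (Nᵀ j) = ∑ i, N i j * y i from rfl]
      rw [Finset.sum_eq_single j]
      · exact Finset.sum_congr rfl fun i _ => by simp [hMdef, mul_comm]
      · intro b _ hb
        exact Finset.sum_eq_zero fun i _ => by simp [hMdef, hb]
      · intro hj; exact absurd (Finset.mem_univ j) hj
    rw [heq] at h0
    exact h0
  · rintro ⟨-, hcol⟩ M ⟨-, hMcol⟩
    rw [traceForm_apply']
    refine Finset.sum_eq_zero fun j _ => ?_
    have h1 : Nᵀ j ∈ perp J := colspace_le_iff.1 hcol j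
    have h2 := mem_perp.1 h1 (Mᵀ j) (colspace_le_iff.1 hMcol j)
    have h3 : dotForm (Mᵀ j) (Nᵀ j) = ∑ i, N i j * M i j := rfl
    rw [h3] at h2
    rw [← h2]
    exact Finset.sum_congr rfl fun i _ => mul_comm _ _

end Aux

/-- The matrices with all columns in `J` are equivalent to `m`-tuples of elements of `J`. -/
noncomputable def codeSubTopEquiv (J : Submodule F (Fin n → F)) :
    (codeSub (⊤ : Submodule F (Matrix (Fin n) (Fin m) F)) J) ≃ₗ[F] (Fin m → J) where
  toFun M := fun j => ⟨(M : Matrix (Fin n) (Fin m) F)ᵀ j, colspace_le_iff.1 M.2.2 j⟩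
  map_add' A B := by funext j; ext i; rfl
  map_smul' c A := by funext j; ext i; rfl
  invFun f := ⟨Matrix.of fun i j => (f j : Fin n → F) i,
    Submodule.mem_top, colspace_le_iff.2 fun j => (f j).2⟩
  left_inv A := by ext i j; rfl
  right_inv f := by funext j; ext i; rfl

lemma finrank_codeSubTop (J : Submodule F (Fin n → F)) :
    Module.finrank F (codeSub (⊤ : Submodule F (Matrix (Fin n) (Fin m) F)) J)
      = m * Module.finrank F J := by
  rw [LinearEquiv.finrank_eq (codeSubTopEquiv (n := n) (m := m) J),
    Module.finrank_pi_fintype]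
  simp [Finset.sum_const, Fintype.card_fin, mul_comm]

/-- Duality identity: `dim C(J) = dim C^⊥(J^⊥) + k − m(n − dim J)`. -/
theorem dim_codeSub_duality (n m : ℕ)
    (C : Submodule F (Matrix (Fin n) (Fin m) F)) (k : ℕ)
    (hk : Module.finrank F C = k) (J : Submodule F (Fin n → F)) :
    (Module.finrank F (codeSub C J) : ℤ)
      = (Module.finrank F (codeSub (dualCode C) (perp J)) : ℤ) + (k : ℤ)
          - (m : ℤ) * ((n : ℤ) - (Module.finrank F J : ℤ)) := by
  classical
  subst hk
  have hCJ : codeSub C J = C ⊓ codeSub ⊤ J := codeSub_eq_inf C J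
  have hdual : codeSub (dualCode C) (perp J)
      = dualCode (C ⊔ codeSub (⊤ : Submodule F (Matrix (Fin n) (Fin m) F)) J) := by
    rw [dualCode_sup, codeSub_eq_inf, dualCode_codeSubTop]
  have h1 := Submodule.finrank_sup_add_finrank_inf_eq C
    (codeSub (⊤ : Submodule F (Matrix (Fin n) (Fin m) F)) J)
  have h2 := finrank_dualCode_add
    (C ⊔ codeSub (⊤ : Submodule F (Matrix (Fin n) (Fin m) F)) J)
  have h3 := finrank_codeSubTop (F := F) (n := n) (m := m) J
  rw [hCJ, hdual]
  have h1' : (Module.finrank F ↥(C ⊔ codeSub (⊤ : Submodule F (Matrix (Fin n) (Fin m) F)) J) : ℤ)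
      + (Module.finrank F ↥(C ⊓ codeSub (⊤ : Submodule F (Matrix (Fin n) (Fin m) F)) J) : ℤ)
      = (Module.finrank F C : ℤ)
        + (Module.finrank F ↥(codeSub (⊤ : Submodule F (Matrix (Fin n) (Fin m) F)) J) : ℤ) := by
    exact_mod_cast h1
  have h2' : (Module.finrank F ↥(dualCode (C ⊔ codeSub (⊤ : Submodule F (Matrix (Fin n) (Fin m) F)) J)) : ℤ)
      + (Module.finrank F ↥(C ⊔ codeSub (⊤ : Submodule F (Matrix (Fin n) (Fin m) F)) J) : ℤ)
      = (n : ℤ) * (m : ℤ) := by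
    exact_mod_cast h2
  have h3' : (Module.finrank F ↥(codeSub (⊤ : Submodule F (Matrix (Fin n) (Fin m) F)) J) : ℤ)
      = (m : ℤ) * (Module.finrank F J : ℤ) := by
    exact_mod_cast h3
  linear_combination h1' - h2' + h3'
end
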